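/- There exists R₀ > 0 (depending only on c and N) such that if R ≥ R₀, then for every integer k ≥ 1 the derivative f′(z) is nonzero for every z in the annulus V_k = {z : 3R_k/2 ≤ |z| ≤ 5R_k/2}. -/

import Mathlib

open Complex

noncomputable section

/-- `f₀(z) = z² + c` iterated `N` times. -/
def f0iter (c : ℂ) (N : ℕ) (z : ℂ) : ℂ := (fun w => w ^ 2 + c)^[N] z

/-- `n_k = 2^(N + k - 1)`. -/
def nseq (N k : ℕ) : ℕ := 2 ^ (N + k - 1)

/-- The radii `R_k`: `R₁ = 2R`, `R_{k+1} = max {|f_k(z)| : |z| = 2 R_k}` where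
`f_k(z) = f₀^N(z) · ∏_{j=1}^k (1 - (1/2)(z/R_j)^{n_j})`. -/
def Rseq (c : ℂ) (N : ℕ) (R : ℝ) : ℕ → ℝ
  | 0 => R
  | 1 => 2 * R
  | k + 2 =>
      sSup ((fun z => ‖f0iter c N z *
        ∏ j ∈ (Finset.Icc 1 (k + 1)).attach,
          (1 - (1 / 2) * (z / ((Rseq c N R j.1 : ℝ) : ℂ)) ^ nseq N j.1)‖) ''
        Metric.sphere (0 : ℂ) (2 * Rseq c N R (k + 1)))
  decreasing_by
  · have := j.2; simp only [Finset.mem_Icc] at this; omega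
  · omega

/-- `F_k(z) = 1 - (1/2)(z/R_k)^{n_k}`. -/
def Fseq (c : ℂ) (N : ℕ) (R : ℝ) (k : ℕ) (z : ℂ) : ℂ :=
  1 - (1 / 2) * (z / ((Rseq c N R k : ℝ) : ℂ)) ^ nseq N k

/-- The partial product `f_k(z) = f₀^N(z) · ∏_{j=1}^k F_j(z)`. -/
def fseq (c : ℂ) (N : ℕ) (R : ℝ) (k : ℕ) (z : ℂ) : ℂ :=
  f0iter c N z * ∏ j ∈ Finset.Icc 1 k, Fseq c N R j z

/-- The infinite product `f(z) = f₀^N(z) · ∏_{k=1}^∞ F_k(z)`. -/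
def flim (c : ℂ) (N : ℕ) (R : ℝ) (z : ℂ) : ℂ :=
  f0iter c N z * ∏' k : ℕ, Fseq c N R (k + 1) z

/-- The standing assumption `1/2 ≤ |f₀^N(z)|/|z|^{2^N} ≤ 2` for `|z| ≥ R`. -/
def OneBound (c : ℂ) (N : ℕ) (R : ℝ) : Prop :=
  ∀ z : ℂ, R ≤ ‖z‖ →
    1 / 2 ≤ ‖f0iter c N z‖ / ‖z‖ ^ 2 ^ N ∧
    ‖f0iter c N z‖ / ‖z‖ ^ 2 ^ N ≤ 2

/-- `C₁ = R₁^{n₁}/2`, and for `k ≥ 2`,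
`C_k = (-1)^{k-1} 2^{-k} R_k^{n_k} ∏_{j=1}^{k-1} R_j^{-n_j}`. -/
def Cseq (c : ℂ) (N : ℕ) (R : ℝ) (k : ℕ) : ℝ :=
  (-1) ^ (k - 1) * Rseq c N R k ^ nseq N k /
    (2 ^ k * ∏ j ∈ Finset.Icc 1 (k - 1), Rseq c N R j ^ nseq N j)

/-! The proof works with `z f'(z) / f(z)`. The infinite product converges locally uniformly
on discs, so this log-derivative is `z (f₀^N)'/f₀^N + ∑ⱼ z F_j'/F_j`, where
`z F_j'/F_j = n_j (1 - 1/F_j)` because `z F_j' = n_j (F_j - 1)`. Take `R₀ = 4(|c| + 2)`, so that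
`|f₀^n(z)| ≥ 2^n |z|` for `|z| ≥ R`.

* `z (f₀^N)'/f₀^N = 2^N ∏_{i<N} (1 - c/f₀^{i+1}(z))`, a product within `1/2` of `1`, so its real
  part is at least `2^{N-1}`.
* Evaluating `f_k` at `2R_k`, where every factor has modulus at least `1`, gives
  `R_{k+1} ≥ 2^{N+1} R_k`. Hence on `V_k` each factor with `j ≤ k` has `|F_j| ≥ 1`, so
  `Re (1 - 1/F_j) ≥ 0`, while for `j > k` we have `|z| ≤ R_j/2` and the terms are bounded by
  `n_j 2^{-n_j} ≤ 2^{1-j}`.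

So `Re (z f'(z)/f(z)) ≥ 2^{N-1} - 2 > 0`, and `f'(z) ≠ 0`. -/

open Finset

theorem norm_one_sub_inv_le_two_mul {𝕜 : Type*} [NormedField 𝕜] {u : 𝕜} (hu : ‖u - 1‖ ≤ 1 / 2) :
    ‖1 - u⁻¹‖ ≤ 2 * ‖u - 1‖ := by
  have hu' : 1 / 2 ≤ ‖u‖ := by
    linarith [norm_sub_norm_le (1 : 𝕜) u, norm_one (α := 𝕜), norm_sub_rev (1 : 𝕜) u]
  have hu0 : u ≠ 0 := norm_pos_iff.mp (by linarith)
  rw [show 1 - u⁻¹ = (u - 1) / u by field_simp, norm_div, div_le_iff₀ (by linarith)]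
  nlinarith [norm_nonneg (u - 1)]

theorem Complex.re_one_sub_inv_nonneg {u : ℂ} (hu : 1 ≤ ‖u‖) : 0 ≤ (1 - u⁻¹).re := by
  rw [sub_re, one_re, sub_nonneg]
  calc u⁻¹.re ≤ ‖u⁻¹‖ := re_le_norm _
    _ = ‖u‖⁻¹ := norm_inv u
    _ ≤ 1 := inv_le_one_of_one_le₀ hu

theorem two_pow_mul_half_pow_two_pow_le (m : ℕ) : (2 : ℝ) ^ m * (1 / 2) ^ 2 ^ m ≤ (1 / 2) ^ m := by
  have hm : m + m ≤ 2 ^ m := by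
    cases m with
    | zero => simp
    | succ m => have := Nat.lt_two_pow_self (n := m); rw [pow_succ]; omega
  rw [one_div_pow, one_div_pow, mul_one_div, div_le_div_iff₀ (by positivity) (by positivity),
    one_mul, ← pow_add]
  exact pow_le_pow_right₀ one_le_two hm

namespace QuadraticIterate

variable {c z : ℂ}

theorem f0iter_succ (c : ℂ) (n : ℕ) (z : ℂ) : f0iter c (n + 1) z = f0iter c n z ^ 2 + c := by
  simp only [f0iter, Function.iterate_succ_apply']

theorem norm_f0iter_ge (hz : ‖c‖ + 2 ≤ ‖z‖) (n : ℕ) : 2 ^ n * ‖z‖ ≤ ‖f0iter c n z‖ := by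
  induction n with
  | zero => simp [f0iter]
  | succ n ih =>
    have hw : ‖z‖ ≤ ‖f0iter c n z‖ := le_trans (le_mul_of_one_le_left (norm_nonneg z)
      (one_le_pow₀ one_le_two)) ih
    have hsq : ‖f0iter c n z‖ ^ 2 - ‖c‖ ≤ ‖f0iter c (n + 1) z‖ := by
      have := norm_sub_norm_le (f0iter c n z ^ 2) (-c)
      rwa [norm_neg, sub_neg_eq_add, norm_pow, ← f0iter_succ] at this
    rw [pow_succ]
    nlinarith [norm_nonneg c]

theorem f0iter_ne_zero (hz : ‖c‖ + 2 ≤ ‖z‖) (n : ℕ) : f0iter c n z ≠ 0 := by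
  have hz0 : 0 < ‖z‖ := by linarith [norm_nonneg c]
  exact norm_pos_iff.mp ((mul_pos (pow_pos two_pos n) hz0).trans_le (norm_f0iter_ge hz n))

theorem hasDerivAt_f0iter (c : ℂ) (n : ℕ) (z : ℂ) :
    HasDerivAt (f0iter c n) (∏ i ∈ range n, 2 * f0iter c i z) z := by
  induction n with
  | zero => exact hasDerivAt_id z
  | succ n ih =>
    have hsq : HasDerivAt (fun w : ℂ => w ^ 2 + c) (2 * f0iter c n z) (f0iter c n z) := by
      simpa using (hasDerivAt_pow 2 (f0iter c n z)).add_const c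
    have hcomp : f0iter c (n + 1) = (fun w => w ^ 2 + c) ∘ f0iter c n :=
      funext (f0iter_succ c n)
    rw [prod_range_succ, mul_comm, hcomp]
    exact hsq.comp z ih

theorem differentiable_f0iter (c : ℂ) (n : ℕ) : Differentiable ℂ (f0iter c n) :=
  fun z => (hasDerivAt_f0iter c n z).differentiableAt

theorem mul_prod_two_mul_f0iter (h : ∀ i, f0iter c (i + 1) z ≠ 0) (n : ℕ) :
    z * ∏ i ∈ range n, 2 * f0iter c i z =
      2 ^ n * (∏ i ∈ range n, (1 - c / f0iter c (i + 1) z)) * f0iter c n z := by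
  induction n with
  | zero => simp [f0iter]
  | succ n ih =>
    have hsq : f0iter c n z ^ 2 = (1 - c / f0iter c (n + 1) z) * f0iter c (n + 1) z := by
      rw [sub_mul, div_mul_cancel₀ _ (h n), one_mul, f0iter_succ, add_sub_cancel_right]
    rw [prod_range_succ, prod_range_succ, ← mul_assoc, ih]
    linear_combination (2 ^ (n + 1) * ∏ i ∈ range n, (1 - c / f0iter c (i + 1) z)) * hsq

theorem mul_logDeriv_f0iter (hz : ‖c‖ + 2 ≤ ‖z‖) (n : ℕ) :
    z * logDeriv (f0iter c n) z = 2 ^ n * ∏ i ∈ range n, (1 - c / f0iter c (i + 1) z) := by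
  rw [logDeriv_apply, (hasDerivAt_f0iter c n z).deriv, ← mul_div_assoc,
    mul_prod_two_mul_f0iter (fun i => f0iter_ne_zero hz (i + 1)),
    mul_div_cancel_right₀ _ (f0iter_ne_zero hz n)]

theorem re_mul_logDeriv_f0iter_ge (hz : 4 * (‖c‖ + 2) ≤ ‖z‖) (n : ℕ) :
    2 ^ n / 2 ≤ (z * logDeriv (f0iter c n) z).re := by
  have hz' : ‖c‖ + 2 ≤ ‖z‖ := by linarith [norm_nonneg c]
  have hzpos : 0 < ‖z‖ := by linarith [norm_nonneg c]
  have hterm : ∀ i, ‖-(c / f0iter c (i + 1) z)‖ ≤ ‖c‖ / ‖z‖ * (1 / 2) ^ (i + 1) := by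
    intro i
    rw [norm_neg, norm_div]
    calc ‖c‖ / ‖f0iter c (i + 1) z‖ ≤ ‖c‖ / (2 ^ (i + 1) * ‖z‖) := by
          gcongr; exact norm_f0iter_ge hz' (i + 1)
      _ = ‖c‖ / ‖z‖ * (1 / 2) ^ (i + 1) := by rw [one_div_pow]; field_simp
  have hsum : ∑ i ∈ range n, ‖-(c / f0iter c (i + 1) z)‖ ≤ 1 / 4 := calc
    _ ≤ ∑ i ∈ range n, ‖c‖ / ‖z‖ * (1 / 2) ^ (i + 1) := sum_le_sum fun i _ => hterm i
    _ = ‖c‖ / ‖z‖ * (∑ i ∈ range n, (1 / 2 : ℝ) ^ i) / 2 := by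
      rw [mul_sum, sum_div]; congr 1; ext i; ring
    _ ≤ ‖c‖ / ‖z‖ * 2 / 2 := by gcongr; exact sum_geometric_two_le n
    _ ≤ 1 / 4 := by
      rw [mul_div_cancel_right₀ _ two_ne_zero, div_le_iff₀ hzpos]; linarith
  have hprod : ‖(∏ i ∈ range n, (1 - c / f0iter c (i + 1) z)) - 1‖ ≤ 1 / 2 := calc
    _ ≤ Real.exp (∑ i ∈ range n, ‖-(c / f0iter c (i + 1) z)‖) - 1 := by
      simpa only [sub_eq_add_neg] using norm_prod_one_add_sub_one_le (range n) _
    _ ≤ Real.exp (1 / 4) - 1 := by gcongr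
    _ ≤ 1 / (1 - 1 / 4) - 1 := by
      gcongr; exact Real.exp_bound_div_one_sub_of_interval (by norm_num) (by norm_num)
    _ ≤ 1 / 2 := by norm_num
  have hre := (abs_le.mp ((abs_re_le_norm _).trans hprod)).1
  rw [mul_logDeriv_f0iter hz', ← ofReal_ofNat, ← ofReal_pow, re_ofReal_mul]
  rw [sub_re, one_re] at hre
  nlinarith [pow_pos (two_pos (α := ℝ)) n]

end QuadraticIterate

section Factors

variable {c : ℂ} {N : ℕ} {R : ℝ} {j : ℕ} {z : ℂ}

theorem four_le_nseq (hN : 3 ≤ N) (j : ℕ) : 4 ≤ nseq N j :=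
  le_trans (by norm_num) (Nat.pow_le_pow_right two_pos (show 2 ≤ N + j - 1 by omega))

theorem le_nseq_succ (N i : ℕ) : i ≤ nseq N (i + 1) :=
  Nat.lt_two_pow_self.le.trans (Nat.pow_le_pow_right two_pos (by omega))

theorem differentiable_Fseq (c : ℂ) (N : ℕ) (R : ℝ) (j : ℕ) : Differentiable ℂ (Fseq c N R j) := by
  unfold Fseq; fun_prop

theorem mul_deriv_Fseq (c : ℂ) (N : ℕ) (R : ℝ) (j : ℕ) (z : ℂ) :
    z * deriv (Fseq c N R j) z = nseq N j * (Fseq c N R j z - 1) := by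
  obtain ⟨m, hm⟩ : ∃ m, nseq N j = m + 1 := ⟨_, (Nat.succ_pred_eq_of_pos Nat.one_le_two_pow).symm⟩
  set r : ℂ := (Rseq c N R j : ℂ)
  have hF : Fseq c N R j = fun x => 1 - 1 / 2 * (x / r) ^ (m + 1) := by ext x; rw [Fseq, hm]
  have hd := ((((hasDerivAt_id' z).div_const r).fun_pow (m + 1)).const_mul (1 / 2 : ℂ)).const_sub 1
  rw [hF, hd.deriv, Nat.add_sub_cancel, hm]
  push_cast
  ring

theorem mul_logDeriv_Fseq (h : Fseq c N R j z ≠ 0) :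
    z * logDeriv (Fseq c N R j) z = nseq N j * (1 - (Fseq c N R j z)⁻¹) := by
  rw [logDeriv_apply, ← mul_div_assoc, mul_deriv_Fseq]
  field_simp

theorem norm_Fseq_sub_one (hR : 0 < Rseq c N R j) (z : ℂ) :
    ‖Fseq c N R j z - 1‖ = (‖z‖ / Rseq c N R j) ^ nseq N j / 2 := by
  simp only [Fseq, one_div, sub_sub_cancel_left, norm_neg, Complex.norm_mul, norm_inv, norm_ofNat,
    norm_pow, Complex.norm_div, norm_real, Real.norm_eq_abs, abs_of_pos hR]
  ring

theorem one_le_norm_Fseq (hR : 0 < Rseq c N R j) (hz : 3 / 2 * Rseq c N R j ≤ ‖z‖)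
    (hn : 4 ≤ nseq N j) : 1 ≤ ‖Fseq c N R j z‖ := by
  have hfar : 2 ≤ ‖Fseq c N R j z - 1‖ := by
    rw [norm_Fseq_sub_one hR]
    calc (2 : ℝ) ≤ (3 / 2) ^ 4 / 2 := by norm_num
      _ ≤ (3 / 2) ^ nseq N j / 2 := by gcongr; norm_num
      _ ≤ (‖z‖ / Rseq c N R j) ^ nseq N j / 2 := by gcongr ?_ ^ _ / _; rwa [le_div_iff₀ hR]
  linarith [norm_sub_le (Fseq c N R j z) 1, norm_one (α := ℂ)]

theorem norm_Fseq_sub_one_le (hR : 0 < Rseq c N R j) (hz : 2 * ‖z‖ ≤ Rseq c N R j) :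
    ‖Fseq c N R j z - 1‖ ≤ (1 / 2) ^ nseq N j / 2 := by
  rw [norm_Fseq_sub_one hR]
  gcongr ?_ ^ _ / _
  rw [div_le_iff₀ hR]; linarith

theorem Fseq_ne_zero_of_two_mul_norm_le (hR : 0 < Rseq c N R j) (hz : 2 * ‖z‖ ≤ Rseq c N R j) :
    Fseq c N R j z ≠ 0 := by
  intro h
  have := norm_Fseq_sub_one_le hR hz
  rw [h, zero_sub, norm_neg, norm_one] at this
  linarith [pow_le_one₀ (by norm_num : (0 : ℝ) ≤ 1 / 2) (by norm_num) (n := nseq N j)]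

theorem norm_nseq_mul_one_sub_inv_Fseq_le (hR : 0 < Rseq c N R j)
    (hz : 2 * ‖z‖ ≤ Rseq c N R j) :
    ‖(nseq N j : ℂ) * (1 - (Fseq c N R j z)⁻¹)‖ ≤ (1 / 2) ^ (N + j - 1) := by
  have hsmall := norm_Fseq_sub_one_le hR hz
  have hhalf : (1 / 2 : ℝ) ^ nseq N j / 2 ≤ 1 / 2 := by
    gcongr; exact pow_le_one₀ (by norm_num) (by norm_num)
  calc ‖(nseq N j : ℂ) * (1 - (Fseq c N R j z)⁻¹)‖ = nseq N j * ‖1 - (Fseq c N R j z)⁻¹‖ := by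
        rw [norm_mul, Complex.norm_natCast]
    _ ≤ nseq N j * (2 * ((1 / 2) ^ nseq N j / 2)) := by
        gcongr
        exact (norm_one_sub_inv_le_two_mul (hsmall.trans hhalf)).trans (by gcongr)
    _ = 2 ^ (N + j - 1) * (1 / 2) ^ 2 ^ (N + j - 1) := by rw [nseq]; push_cast; ring
    _ ≤ (1 / 2) ^ (N + j - 1) := two_pow_mul_half_pow_two_pow_le _

end Factors

section Radii

open QuadraticIterate

variable {c : ℂ} {N : ℕ} {R : ℝ} {i j k : ℕ}

theorem differentiable_fseq (c : ℂ) (N : ℕ) (R : ℝ) (k : ℕ) : Differentiable ℂ (fseq c N R k) :=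
  (differentiable_f0iter c N).mul
    (Differentiable.fun_finsetProd fun j _ => differentiable_Fseq c N R j)

theorem Rseq_succ (hk : 1 ≤ k) :
    Rseq c N R (k + 1) =
      sSup ((fun z => ‖fseq c N R k z‖) '' Metric.sphere 0 (2 * Rseq c N R k)) := by
  obtain ⟨m, rfl⟩ := Nat.exists_eq_add_of_le' hk
  rw [Rseq]
  congr 2
  ext z
  simp only [fseq, Fseq]
  rw [prod_attach (Icc 1 (m + 1)) fun j => 1 - 1 / 2 * (z / (Rseq c N R j : ℂ)) ^ nseq N j]

theorem norm_fseq_le_Rseq_succ (hk : 1 ≤ k) {z : ℂ} (hz : ‖z‖ = 2 * Rseq c N R k) :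
    ‖fseq c N R k z‖ ≤ Rseq c N R (k + 1) := by
  rw [Rseq_succ hk]
  refine le_csSup ?_ ⟨z, by simpa using hz, rfl⟩
  exact ((isCompact_sphere 0 _).image (differentiable_fseq c N R k).continuous.norm).bddAbove

theorem two_pow_mul_le_Rseq_succ (hN : 3 ≤ N) (hk : 1 ≤ k) (hc : ‖c‖ + 2 ≤ 2 * Rseq c N R k)
    (hR : ∀ j ∈ Icc 1 k, 0 < Rseq c N R j ∧ Rseq c N R j ≤ Rseq c N R k) :
    2 ^ N * (2 * Rseq c N R k) ≤ Rseq c N R (k + 1) := by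
  set z₀ : ℂ := ((2 * Rseq c N R k : ℝ) : ℂ)
  have hz₀ : ‖z₀‖ = 2 * Rseq c N R k := by
    simp [z₀, abs_of_pos (hR k (mem_Icc.mpr ⟨hk, le_rfl⟩)).1]
  have hF : ∀ j ∈ Icc 1 k, 1 ≤ ‖Fseq c N R j z₀‖ := fun j hj =>
    one_le_norm_Fseq (hR j hj).1 (by linarith [(hR j hj).1, (hR j hj).2]) (four_le_nseq hN j)
  calc 2 ^ N * (2 * Rseq c N R k) = 2 ^ N * ‖z₀‖ := by rw [hz₀]
    _ ≤ ‖f0iter c N z₀‖ := norm_f0iter_ge (hz₀ ▸ hc) N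
    _ ≤ ‖f0iter c N z₀‖ * ∏ j ∈ Icc 1 k, ‖Fseq c N R j z₀‖ :=
      le_mul_of_one_le_right (norm_nonneg _) (one_le_prod hF)
    _ = ‖fseq c N R k z₀‖ := by rw [fseq, norm_mul, norm_prod]
    _ ≤ Rseq c N R (k + 1) := norm_fseq_le_Rseq_succ hk hz₀

theorem le_Rseq_and_Rseq_le (hN : 3 ≤ N) (hR : ‖c‖ + 2 ≤ R) (hk : 1 ≤ k) :
    ∀ j ∈ Icc 1 k, R ≤ Rseq c N R j ∧ Rseq c N R j ≤ Rseq c N R k := by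
  have hR0 : 0 < R := by linarith [norm_nonneg c]
  induction k, hk using Nat.le_induction with
  | base =>
    intro j hj
    obtain rfl : j = 1 := by simp only [mem_Icc] at hj; omega
    simp only [Rseq]
    constructor <;> linarith
  | succ k hk ih =>
    have hRk := (ih k (mem_Icc.mpr ⟨hk, le_rfl⟩)).1
    have hstep := two_pow_mul_le_Rseq_succ hN hk (by linarith)
      fun j hj => ⟨by linarith [(ih j hj).1], (ih j hj).2⟩
    have hmono : Rseq c N R k ≤ Rseq c N R (k + 1) := by
      nlinarith [one_le_pow₀ (M₀ := ℝ) one_le_two (n := N)]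
    intro j hj
    rcases (mem_Icc.mp hj).2.lt_or_eq with hjk | rfl
    · have := ih j (mem_Icc.mpr ⟨(mem_Icc.mp hj).1, Nat.lt_succ_iff.mp hjk⟩)
      exact ⟨this.1, this.2.trans hmono⟩
    · exact ⟨hRk.trans hmono, le_rfl⟩

theorem le_Rseq (hN : 3 ≤ N) (hR : ‖c‖ + 2 ≤ R) (hk : 1 ≤ k) : R ≤ Rseq c N R k :=
  (le_Rseq_and_Rseq_le hN hR hk k (mem_Icc.mpr ⟨hk, le_rfl⟩)).1

theorem Rseq_pos (hN : 3 ≤ N) (hR : ‖c‖ + 2 ≤ R) (hk : 1 ≤ k) : 0 < Rseq c N R k := by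
  linarith [le_Rseq hN hR hk, norm_nonneg c]

theorem Rseq_le_Rseq (hN : 3 ≤ N) (hR : ‖c‖ + 2 ≤ R) (hi : 1 ≤ i) (hij : i ≤ j) :
    Rseq c N R i ≤ Rseq c N R j :=
  (le_Rseq_and_Rseq_le hN hR (hi.trans hij) i (mem_Icc.mpr ⟨hi, hij⟩)).2

theorem five_mul_Rseq_le (hN : 3 ≤ N) (hR : ‖c‖ + 2 ≤ R) (hk : 1 ≤ k) (hkj : k < j) :
    5 * Rseq c N R k ≤ Rseq c N R j := by
  have hRk := le_Rseq hN hR hk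
  have hstep := two_pow_mul_le_Rseq_succ hN hk (by linarith [norm_nonneg c]) fun i hi =>
    ⟨Rseq_pos hN hR (mem_Icc.mp hi).1, Rseq_le_Rseq hN hR (mem_Icc.mp hi).1 (mem_Icc.mp hi).2⟩
  have h8 : (8 : ℝ) ≤ 2 ^ N := le_trans (by norm_num) (pow_le_pow_right₀ one_le_two hN)
  nlinarith [Rseq_le_Rseq hN hR (Nat.le_succ_of_le hk) hkj, norm_nonneg c]

theorem one_le_norm_Fseq_of_le (hN : 3 ≤ N) (hR : ‖c‖ + 2 ≤ R) (hj : 1 ≤ j) (hjk : j ≤ k)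
    {z : ℂ} (hz : 3 * Rseq c N R k / 2 ≤ ‖z‖) : 1 ≤ ‖Fseq c N R j z‖ :=
  one_le_norm_Fseq (Rseq_pos hN hR hj) (by linarith [Rseq_le_Rseq hN hR hj hjk])
    (four_le_nseq hN j)

theorem two_mul_norm_le_Rseq (hN : 3 ≤ N) (hR : ‖c‖ + 2 ≤ R) (hk : 1 ≤ k) (hkj : k < j)
    {z : ℂ} (hz : ‖z‖ ≤ 5 * Rseq c N R k / 2) : 2 * ‖z‖ ≤ Rseq c N R j := by
  linarith [five_mul_Rseq_le hN hR hk hkj]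

theorem Fseq_ne_zero_of_mem_annulus (hN : 3 ≤ N) (hR : ‖c‖ + 2 ≤ R) (hk : 1 ≤ k) (hj : 1 ≤ j)
    {z : ℂ} (hz₁ : 3 * Rseq c N R k / 2 ≤ ‖z‖) (hz₂ : ‖z‖ ≤ 5 * Rseq c N R k / 2) :
    Fseq c N R j z ≠ 0 := by
  rcases le_or_gt j k with hjk | hkj
  · exact norm_pos_iff.mp (one_pos.trans_le (one_le_norm_Fseq_of_le hN hR hj hjk hz₁))
  · exact Fseq_ne_zero_of_two_mul_norm_le (Rseq_pos hN hR hj)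
      (two_mul_norm_le_Rseq hN hR hk hkj hz₂)

end Radii

section Product

open QuadraticIterate Metric Filter

variable {c : ℂ} {N : ℕ} {R r : ℝ} {i k : ℕ}

theorem norm_Fseq_sub_one_le_of_mem_ball (hr : 0 < r) (hRr : 5 * r ≤ 3 * Rseq c N R (i + 1))
    {x : ℂ} (hx : x ∈ ball 0 r) : ‖Fseq c N R (i + 1) x - 1‖ ≤ (3 / 5) ^ i := by
  have hR : 0 < Rseq c N R (i + 1) := by linarith
  rw [mem_ball_zero_iff] at hx
  rw [norm_Fseq_sub_one hR]
  calc (‖x‖ / Rseq c N R (i + 1)) ^ nseq N (i + 1) / 2 ≤ (3 / 5) ^ nseq N (i + 1) / 2 := by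
        gcongr ?_ ^ _ / _; rw [div_le_iff₀ hR]; linarith
    _ ≤ (3 / 5) ^ nseq N (i + 1) := by
        linarith [pow_nonneg (by norm_num : (0 : ℝ) ≤ 3 / 5) (nseq N (i + 1))]
    _ ≤ (3 / 5) ^ i := pow_le_pow_of_le_one (by norm_num) (by norm_num) (le_nseq_succ N i)

theorem multipliableLocallyUniformlyOn_Fseq (hr : 0 < r)
    (hRr : ∀ i ≥ k, 5 * r ≤ 3 * Rseq c N R (i + 1)) :
    MultipliableLocallyUniformlyOn (fun i x => Fseq c N R (i + 1) x) (ball 0 r) := by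
  simpa using (summable_geometric_of_lt_one (by norm_num) (by norm_num : (3 / 5 : ℝ) < 1)
    ).multipliableLocallyUniformlyOn_nat_one_add (f := fun i x => Fseq c N R (i + 1) x - 1)
    isOpen_ball
    (eventually_atTop.mpr ⟨k, fun i hi x hx => norm_Fseq_sub_one_le_of_mem_ball hr (hRr i hi) hx⟩)
    fun i => ((differentiable_Fseq c N R (i + 1)).continuous.sub continuous_const).continuousOn

theorem mul_logDeriv_flim (hr : 0 < r) (hRr : ∀ i ≥ k, 5 * r ≤ 3 * Rseq c N R (i + 1))
    {z : ℂ} (hz : z ∈ ball 0 r) (hz0 : z ≠ 0) (hf0 : f0iter c N z ≠ 0)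
    (hF : ∀ i, Fseq c N R (i + 1) z ≠ 0)
    (hsum : Summable fun i => (nseq N (i + 1) : ℂ) * (1 - (Fseq c N R (i + 1) z)⁻¹)) :
    z * logDeriv (flim c N R) z = z * logDeriv (f0iter c N) z +
      ∑' i, (nseq N (i + 1) : ℂ) * (1 - (Fseq c N R (i + 1) z)⁻¹) := by
  have hmult := multipliableLocallyUniformlyOn_Fseq hr hRr
  have hprod_ne : ∏' i, Fseq c N R (i + 1) z ≠ 0 := by
    simpa using tprod_one_add_ne_zero_of_summable (f := fun i => Fseq c N R (i + 1) z - 1)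
      (by simpa using hF)
      (Summable.of_norm_bounded_eventually_nat (summable_geometric_of_lt_one (by norm_num)
        (by norm_num : (3 / 5 : ℝ) < 1)) (eventually_atTop.mpr ⟨k, fun i hi => by
          simpa using norm_Fseq_sub_one_le_of_mem_ball hr (hRr i hi) hz⟩))
  have hdiff : DifferentiableAt ℂ (fun x => ∏' i, Fseq c N R (i + 1) x) z :=
    (hmult.hasProdLocallyUniformlyOn.differentiableOn (.of_forall fun s =>
      (Differentiable.fun_finsetProd fun i _ => differentiable_Fseq c N R (i + 1)).differentiableOn)
      isOpen_ball z hz).differentiableAt (isOpen_ball.mem_nhds hz)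
  have hsum_log : Summable fun i => logDeriv (Fseq c N R (i + 1)) z := by
    refine (hsum.mul_left z⁻¹).congr fun i => ?_
    rw [← mul_logDeriv_Fseq (hF i), inv_mul_cancel_left₀ hz0]
  have hlog := logDeriv_tprod_eq_tsum isOpen_ball hz hF
    (fun i => (differentiable_Fseq c N R (i + 1)).differentiableOn) hsum_log hmult hprod_ne
  change z * logDeriv (fun x => f0iter c N x * ∏' i, Fseq c N R (i + 1) x) z = _
  rw [logDeriv_mul z hf0 hprod_ne (differentiable_f0iter c N z) hdiff, hlog, mul_add,
    ← tsum_mul_left]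
  simp only [mul_logDeriv_Fseq (hF _)]

theorem re_mul_logDeriv_flim_pos (hN : 3 ≤ N) (hR : 4 * (‖c‖ + 2) ≤ R) (hk : 1 ≤ k) {z : ℂ}
    (hz₁ : 3 * Rseq c N R k / 2 ≤ ‖z‖) (hz₂ : ‖z‖ ≤ 5 * Rseq c N R k / 2) :
    0 < (z * logDeriv (flim c N R) z).re := by
  have hR' : ‖c‖ + 2 ≤ R := by linarith [norm_nonneg c]
  have hRk := le_Rseq hN hR' hk
  have hRk_pos := Rseq_pos hN hR' hk
  have hz : 4 * (‖c‖ + 2) ≤ ‖z‖ := by linarith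
  have htail : ∀ i ≥ k, 5 * (3 * Rseq c N R k) ≤ 3 * Rseq c N R (i + 1) := fun i hi => by
    linarith [five_mul_Rseq_le hN hR' hk (by omega : k < i + 1)]
  have hzball : z ∈ ball 0 (3 * Rseq c N R k) := by
    rw [mem_ball_zero_iff]; linarith
  set T : ℕ → ℂ := fun i => (nseq N (i + 1) : ℂ) * (1 - (Fseq c N R (i + 1) z)⁻¹)
  have hT_tail : ∀ i ≥ k, ‖T i‖ ≤ (1 / 2) ^ i := fun i hi =>
    (norm_nseq_mul_one_sub_inv_Fseq_le (Rseq_pos hN hR' (by omega))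
      (two_mul_norm_le_Rseq hN hR' hk (by omega) hz₂)).trans
      (pow_le_pow_of_le_one (by norm_num) (by norm_num) (by omega))
  have hT_re : ∀ i, -(1 / 2) ^ i ≤ (T i).re := by
    intro i
    rcases lt_or_ge i k with hi | hi
    · have := Complex.re_one_sub_inv_nonneg (one_le_norm_Fseq_of_le hN hR' (by omega) hi hz₁)
      simp only [T, mul_re, natCast_re, natCast_im, zero_mul, sub_zero]
      linarith [pow_nonneg (by norm_num : (0 : ℝ) ≤ 1 / 2) i,
        mul_nonneg (Nat.cast_nonneg (nseq N (i + 1))) this]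
    · exact neg_le_of_abs_le ((abs_re_le_norm _).trans (hT_tail i hi))
  have hT : Summable T :=
    .of_norm_bounded_eventually_nat summable_geometric_two (eventually_atTop.mpr ⟨k, hT_tail⟩)
  have hsum_re : -2 ≤ ∑' i, (T i).re := by
    have := summable_geometric_two.neg.tsum_le_tsum hT_re (reCLM.summable hT)
    rwa [tsum_neg, tsum_geometric_two] at this
  rw [mul_logDeriv_flim (by linarith) htail hzball (norm_pos_iff.mp (by linarith [norm_nonneg c]))
    (f0iter_ne_zero (by linarith [norm_nonneg c]) N)
    (fun i => Fseq_ne_zero_of_mem_annulus hN hR' hk (by omega) hz₁ hz₂) hT, add_re, re_tsum hT]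
  have h8 : (8 : ℝ) ≤ 2 ^ N := le_trans (by norm_num) (pow_le_pow_right₀ one_le_two hN)
  linarith [re_mul_logDeriv_f0iter_ge hz N]

end Product

/-- There is `R₀ > 0` (depending only on `c`, `N`) such that for `R ≥ R₀` and every
`k ≥ 1`, `f'` is nonzero on `V_k = {z : 3R_k/2 ≤ |z| ≤ 5R_k/2}`. -/
theorem stmt13 (c : ℂ) (N : ℕ) (hN : 10 ≤ N) :
    ∃ R₀ : ℝ, 0 < R₀ ∧
      ∀ R : ℝ, R₀ ≤ R → OneBound c N R →
        ∀ k : ℕ, 1 ≤ k → ∀ z : ℂ,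
          3 * Rseq c N R k / 2 ≤ ‖z‖ → ‖z‖ ≤ 5 * Rseq c N R k / 2 →
          deriv (flim c N R) z ≠ 0 := by
  refine ⟨4 * (‖c‖ + 2), by positivity, fun R hR _ k hk z hz₁ hz₂ hderiv => ?_⟩
  have hpos := re_mul_logDeriv_flim_pos (by omega) hR hk hz₁ hz₂
  rw [logDeriv_apply, hderiv, zero_div, mul_zero, zero_re] at hpos
  exact lt_irrefl 0 hpos

end
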